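/- arXiv:2112.09109 — 5 statements merged into one kernel-verified Lean document; each statement's English description precedes it below -/
import Mathlib

section
/- Let d be a positive integer and for each composition α of d let χ_α be the character of a finite-dimensional complex representation of a finite group G, such that whenever α ≤ β (β refines α), χ_β − χ_α is also a character of a representation. Define f_i = Σ_{α: ℓ(α)=i} χ_α. Then for all i, (d−i)·f_i is the character of a subrepresentation of the representation with character i·f_{i+1}, i.e., i·f_{i+1} − (d−i)·f_i is an effective character. -/
/-- A complex-valued function on `G` is an effective character if it is the character
of some finite-dimensional complex representation of `G`. -/
def IsEffectiveChar (G : Type) [Group G] (χ : G → ℂ) : Prop :=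
  ∃ W : FDRep ℂ G, ∀ g : G, χ g = W.character g

section Eff
variable {G : Type} [Group G]

lemma eff_zero : IsEffectiveChar G (fun _ => 0) := by
  refine ⟨FDRep.of (1 : Representation ℂ G PUnit), fun g => ?_⟩
  show (0:ℂ) = LinearMap.trace ℂ PUnit ((1 : Representation ℂ G PUnit) g)
  rw [Subsingleton.elim ((1 : Representation ℂ G PUnit) g) 0]
  simp

/-- direct sum of two representations -/
noncomputable def repProd {V₁ V₂ : Type} [AddCommGroup V₁] [Module ℂ V₁]
    [AddCommGroup V₂] [Module ℂ V₂] (ρ₁ : Representation ℂ G V₁)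
    (ρ₂ : Representation ℂ G V₂) : Representation ℂ G (V₁ × V₂) where
  toFun g := (ρ₁ g).prodMap (ρ₂ g)
  map_one' := by ext <;> simp
  map_mul' g h := by ext <;> simp

lemma eff_add {f₁ f₂ : G → ℂ} (h₁ : IsEffectiveChar G f₁) (h₂ : IsEffectiveChar G f₂) :
    IsEffectiveChar G (fun g => f₁ g + f₂ g) := by
  obtain ⟨W₁, hW₁⟩ := h₁
  obtain ⟨W₂, hW₂⟩ := h₂
  refine ⟨FDRep.of (repProd W₁.ρ W₂.ρ), fun g => ?_⟩
  show f₁ g + f₂ g = _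
  rw [hW₁ g, hW₂ g]
  show _ = LinearMap.trace ℂ (W₁ × W₂) ((W₁.ρ g).prodMap (W₂.ρ g))
  exact (LinearMap.trace_prodMap' _ _).symm

lemma eff_sum {ι : Type*} (s : Finset ι) (F : ι → G → ℂ)
    (h : ∀ a ∈ s, IsEffectiveChar G (F a)) :
    IsEffectiveChar G (fun g => ∑ a ∈ s, F a g) := by
  induction s using Finset.cons_induction with
  | empty => simpa using eff_zero
  | cons a s ha ih =>
      simp only [Finset.sum_cons]
      exact eff_add (h a (Finset.mem_cons_self a s))
        (ih fun b hb => h b (Finset.mem_cons_of_mem hb))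

end Eff

section Comp
variable {d : ℕ}

lemma zero_mem_boundaries (c : Composition d) : 0 ∈ c.boundaries :=
  c.toCompositionAsSet.zero_mem

lemma last_mem_boundaries (c : Composition d) : Fin.last d ∈ c.boundaries :=
  c.toCompositionAsSet.getLast_mem

lemma boundaries_injective :
    Function.Injective (Composition.boundaries : Composition d → Finset (Fin (d+1))) := by
  intro a b h
  have : a.toCompositionAsSet = b.toCompositionAsSet := by
    apply CompositionAsSet.ext
    simpa using h
  exact (compositionEquiv d).injective this

/-- Composition from a boundary set. -/
def mkComp (s : Finset (Fin (d+1))) (h0 : 0 ∈ s) (hl : Fin.last d ∈ s) : Composition d :=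
  (CompositionAsSet.mk s h0 hl).toComposition

lemma mkComp_boundaries (s : Finset (Fin (d+1))) (h0 : 0 ∈ s) (hl : Fin.last d ∈ s) :
    (mkComp s h0 hl).boundaries = s :=
  CompositionAsSet.toComposition_boundaries _

lemma mkComp_length (s : Finset (Fin (d+1))) (h0 : 0 ∈ s) (hl : Fin.last d ∈ s) :
    (mkComp s h0 hl).length + 1 = s.card := by
  have := (mkComp s h0 hl).card_boundaries_eq_succ_length
  rw [mkComp_boundaries] at this
  omega

end Comp

/-- Refinement of a composition by inserting an extra boundary point. -/
def refMap {d : ℕ} (p : (_ : Composition d) × Fin (d + 1)) : Composition d :=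
  mkComp (insert p.2 p.1.boundaries)
    (Finset.mem_insert_of_mem (zero_mem_boundaries _))
    (Finset.mem_insert_of_mem (last_mem_boundaries _))

lemma refMap_boundaries {d : ℕ} (p : (_ : Composition d) × Fin (d + 1)) :
    (refMap p).boundaries = insert p.2 p.1.boundaries :=
  mkComp_boundaries _ _ _

lemma refMap_length {d : ℕ} (p : (_ : Composition d) × Fin (d + 1))
    (h : p.2 ∉ p.1.boundaries) : (refMap p).length = p.1.length + 1 := by
  have h2 : (refMap p).length + 1 = (insert p.2 p.1.boundaries).card := by
    have := (refMap p).card_boundaries_eq_succ_length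
    rw [refMap_boundaries] at this
    omega
  rw [Finset.card_insert_of_notMem h, p.1.card_boundaries_eq_succ_length] at h2
  omega


/-- Let `d > 0` and for each composition `α` of `d` let `χ_α` be the character of a
finite-dimensional complex representation of a finite group `G`, such that whenever
`β` refines `α` (i.e. the boundary set of `α` is contained in that of `β`), the
difference `χ_β − χ_α` is again a character.  Setting
`f_i = Σ_{α : ℓ(α) = i} χ_α`, for every `i` the class function
`i·f_{i+1} − (d−i)·f_i` is an effective character; equivalently `(d−i)·f_i` is the
character of a subrepresentation of a representation with character `i·f_{i+1}`. -/
theorem effective_char_binomial_inequality (G : Type) [Group G] [Fintype G]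
    (d : ℕ) (hd : 0 < d) (χ : Composition d → G → ℂ)
    (heff : ∀ α : Composition d, IsEffectiveChar G (χ α))
    (hmono : ∀ α β : Composition d, α.boundaries ⊆ β.boundaries →
      IsEffectiveChar G (χ β - χ α)) (i : ℕ) :
    IsEffectiveChar G (fun g : G =>
      (i : ℂ) * ∑ α ∈ Finset.univ.filter (fun α : Composition d => α.length = i + 1), χ α g
        - ((d - i : ℕ) : ℂ) *
            ∑ α ∈ Finset.univ.filter (fun α : Composition d => α.length = i), χ α g) := by
  classical
  set A := Finset.univ.filter (fun α : Composition d => α.length = i) with hA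
  set B := Finset.univ.filter (fun α : Composition d => α.length = i + 1) with hB
  set P : Finset ((_ : Composition d) × Fin (d+1)) := A.sigma (fun α => α.boundariesᶜ) with hP
  set Q : Finset ((_ : Composition d) × Fin (d+1)) :=
    B.sigma (fun β => (β.boundaries.erase 0).erase (Fin.last d)) with hQ
  have hlast0 : (Fin.last d : Fin (d+1)) ≠ 0 := by
    simp [Fin.ext_iff]; omega
  have key : ∀ g : G,
      ((i : ℂ) * ∑ α ∈ B, χ α g - ((d - i : ℕ) : ℂ) * ∑ α ∈ A, χ α g)
        = ∑ p ∈ P, ((χ (refMap p) - χ p.1) g) := by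
    intro g
    have hsub : ∑ p ∈ P, ((χ (refMap p) - χ p.1) g)
        = ∑ p ∈ P, χ (refMap p) g - ∑ p ∈ P, χ p.1 g := by
      simp [Finset.sum_sub_distrib]
    rw [hsub]
    have ha : ∑ p ∈ P, χ p.1 g = ((d - i : ℕ) : ℂ) * ∑ α ∈ A, χ α g := by
      rw [hP, Finset.sum_sigma, Finset.mul_sum]
      refine Finset.sum_congr rfl (fun α hα => ?_)
      have hlen : α.length = i := by
        rw [hA] at hα; exact (Finset.mem_filter.mp hα).2
      trans ∑ _s ∈ α.boundariesᶜ, χ α g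
      · rfl
      rw [Finset.sum_const, Finset.card_compl, α.card_boundaries_eq_succ_length, hlen]
      have : Fintype.card (Fin (d+1)) - (i+1) = d - i := by simp
      rw [this, nsmul_eq_mul]
    have hb : ∑ p ∈ P, χ (refMap p) g = ∑ q ∈ Q, χ q.1 g := by
      refine Finset.sum_bij'
        (fun p _ => (⟨refMap p, p.2⟩ : (_ : Composition d) × Fin (d+1)))
        (fun q hq => ⟨mkComp (q.1.boundaries.erase q.2)
          (Finset.mem_erase.mpr ⟨Ne.symm (Finset.mem_erase.mp
            (Finset.mem_erase.mp (Finset.mem_sigma.mp hq).2).2).1,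
            zero_mem_boundaries _⟩)
          (Finset.mem_erase.mpr ⟨Ne.symm (Finset.mem_erase.mp
            (Finset.mem_sigma.mp hq).2).1, last_mem_boundaries _⟩), q.2⟩)
        ?_ ?_ ?_ ?_ ?_
      · -- forward map lands in Q
        rintro ⟨α, x⟩ hp
        obtain ⟨h1, h2⟩ := Finset.mem_sigma.mp hp
        have hxB : x ∉ α.boundaries := Finset.mem_compl.mp h2
        have hlen : α.length = i := (Finset.mem_filter.mp h1).2
        refine Finset.mem_sigma.mpr ⟨?_, ?_⟩
        · refine Finset.mem_filter.mpr ⟨Finset.mem_univ _, ?_⟩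
          show (refMap ⟨α, x⟩).length = i + 1
          rw [refMap_length _ hxB]
          simpa using hlen
        · show x ∈ _
          refine Finset.mem_erase.mpr ⟨?_, Finset.mem_erase.mpr ⟨?_, ?_⟩⟩
          · intro h; exact hxB (by rw [h]; exact last_mem_boundaries α)
          · intro h; exact hxB (by rw [h]; exact zero_mem_boundaries α)
          · rw [show (refMap ⟨α, x⟩).boundaries = insert x α.boundaries from
              refMap_boundaries _]
            exact Finset.mem_insert_self _ _
      · -- backward map lands in P
        rintro ⟨β, x⟩ hq
        obtain ⟨h1, h2⟩ := Finset.mem_sigma.mp hq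
        have hlen : β.length = i + 1 := (Finset.mem_filter.mp h1).2
        have hx : x ∈ β.boundaries :=
          Finset.mem_of_mem_erase (Finset.mem_of_mem_erase h2)
        have hc : (β.boundaries.erase x).card = i + 1 := by
          rw [Finset.card_erase_of_mem hx,
            β.card_boundaries_eq_succ_length, hlen]
          omega
        refine Finset.mem_sigma.mpr ⟨?_, ?_⟩
        · refine Finset.mem_filter.mpr ⟨Finset.mem_univ _, ?_⟩
          show (mkComp (β.boundaries.erase x) _ _).length = i
          have h3 := mkComp_length (β.boundaries.erase x)
            (Finset.mem_erase.mpr ⟨Ne.symm (Finset.mem_erase.mp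
              (Finset.mem_erase.mp h2).2).1, zero_mem_boundaries _⟩)
            (Finset.mem_erase.mpr ⟨Ne.symm (Finset.mem_erase.mp h2).1,
              last_mem_boundaries _⟩)
          rw [hc] at h3
          omega
        · show x ∈ _
          rw [Finset.mem_compl, mkComp_boundaries]
          exact Finset.notMem_erase _ _
      · -- left inverse
        rintro ⟨α, x⟩ hp
        obtain ⟨h1, h2⟩ := Finset.mem_sigma.mp hp
        have hxB : x ∉ α.boundaries := Finset.mem_compl.mp h2
        refine congrArg (fun c => (⟨c, x⟩ : (_ : Composition d) × Fin (d + 1))) ?_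
        apply boundaries_injective
        rw [mkComp_boundaries]
        rw [show (refMap ⟨α, x⟩).boundaries = insert x α.boundaries from
          refMap_boundaries _]
        exact Finset.erase_insert hxB
      · -- right inverse
        rintro ⟨β, x⟩ hq
        obtain ⟨h1, h2⟩ := Finset.mem_sigma.mp hq
        have hx : x ∈ β.boundaries :=
          Finset.mem_of_mem_erase (Finset.mem_of_mem_erase h2)
        refine congrArg (fun c => (⟨c, x⟩ : (_ : Composition d) × Fin (d + 1))) ?_
        apply boundaries_injective
        rw [refMap_boundaries, mkComp_boundaries]
        exact Finset.insert_erase hx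
      · intro a _
        rfl
    have hc : ∑ q ∈ Q, χ q.1 g = (i : ℂ) * ∑ α ∈ B, χ α g := by
      rw [hQ, Finset.sum_sigma, Finset.mul_sum]
      refine Finset.sum_congr rfl (fun β hβ => ?_)
      have hlen : β.length = i + 1 := by
        rw [hB] at hβ; exact (Finset.mem_filter.mp hβ).2
      have hlmem : Fin.last d ∈ β.boundaries.erase 0 :=
        Finset.mem_erase.mpr ⟨hlast0, last_mem_boundaries _⟩
      trans ∑ _s ∈ (β.boundaries.erase 0).erase (Fin.last d), χ β g
      · rfl
      rw [Finset.sum_const, Finset.card_erase_of_mem hlmem,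
        Finset.card_erase_of_mem (zero_mem_boundaries _),
        β.card_boundaries_eq_succ_length, hlen]
      have : i + 1 + 1 - 1 - 1 = i := by omega
      rw [this, nsmul_eq_mul]
    rw [hb, hc, ha]
  have heffsum : IsEffectiveChar G (fun g => ∑ p ∈ P, ((χ (refMap p) - χ p.1) g)) := by
    refine eff_sum P _ (fun p hp => ?_)
    refine hmono p.1 (refMap p) ?_
    intro x hx
    rw [refMap_boundaries]
    exact Finset.mem_insert_of_mem hx
  obtain ⟨W, hW⟩ := heffsum
  exact ⟨W, fun g => (key g).trans (hW g)⟩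
end

section
/- Let Φ be a pure balanced relative simplicial complex of dimension d with coloring κ: V → [d+1], and let S ⊆ T ⊆ [d+1]. Define a linear map θ from the free complex vector space on the faces σ of Φ with κ(σ) = S to the free vector space on the faces τ of Φ with κ(τ) = T by θ(σ) = Σ_{τ: σ ⊆ τ, κ(τ)=T} τ. Then θ is injective. -/
/-- Let `Φ` be a pure balanced relative simplicial complex of dimension `d` on a vertex
set `V` with coloring `κ : V → [d+1]`: (1) if `ρ ⊆ σ ⊆ τ` with `ρ, τ ∈ Φ` then
`σ ∈ Φ`; (2) every face is contained in a face of `Φ` with `d+1` vertices; (3) `κ` is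
injective on every face.  For color sets `S ⊆ T ⊆ [d+1]`, the linear map `θ` from the
free complex vector space on the faces `σ` with `κ(σ) = S` to the free vector space on
the faces `τ` with `κ(τ) = T`, defined by `θ(σ) = Σ_{τ ⊇ σ, κ(τ) = T} τ`, is
injective. -/
theorem balanced_relative_complex_theta_injective
    {V : Type} [Fintype V] [DecidableEq V] (d : ℕ)
    (Φ : Finset (Finset V)) (κ : V → Fin (d + 1))
    (hne : Φ.Nonempty)
    (hsandwich : ∀ ρ σ τ : Finset V, ρ ∈ Φ → τ ∈ Φ → ρ ⊆ σ → σ ⊆ τ → σ ∈ Φ)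
    (hpure : ∀ ρ ∈ Φ, ∃ σ ∈ Φ, ρ ⊆ σ ∧ σ.card = d + 1)
    (hbal : ∀ σ ∈ Φ, (σ.image κ).card = σ.card)
    (S T : Finset (Fin (d + 1))) (hST : S ⊆ T) :
    Function.Injective
      (Finsupp.lsum ℂ (fun σ : {σ : Finset V // σ ∈ Φ ∧ σ.image κ = S} =>
        LinearMap.toSpanSingleton ℂ
          ({τ : Finset V // τ ∈ Φ ∧ τ.image κ = T} →₀ ℂ)
          (∑ τ : {τ : Finset V // τ ∈ Φ ∧ τ.image κ = T},
            if σ.1 ⊆ τ.1 then Finsupp.single τ (1 : ℂ) else 0))) := by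
  rw [← LinearMap.ker_eq_bot, LinearMap.ker_eq_bot']
  intro f hf
  ext σ
  obtain ⟨hσΦ, hσS⟩ := σ.2
  obtain ⟨γ, hγΦ, hσγ, hγcard⟩ := hpure σ.1 hσΦ
  have hγuniv : γ.image κ = Finset.univ := by
    apply Finset.eq_univ_of_card
    rw [hbal γ hγΦ, hγcard, Fintype.card_fin]
  set τ : Finset V := γ.filter (fun v => κ v ∈ T) with hτdef
  have hστ : σ.1 ⊆ τ := by
    intro v hv
    exact Finset.mem_filter.mpr ⟨hσγ hv, hST (hσS ▸ Finset.mem_image_of_mem κ hv)⟩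
  have hτγ : τ ⊆ γ := Finset.filter_subset _ _
  have hτΦ : τ ∈ Φ := hsandwich σ.1 τ γ hσΦ hγΦ hστ hτγ
  have hτT : τ.image κ = T := by
    apply Finset.Subset.antisymm
    · intro t ht
      obtain ⟨v, hv, rfl⟩ := Finset.mem_image.mp ht
      exact (Finset.mem_filter.mp hv).2
    · intro t ht
      have : t ∈ γ.image κ := hγuniv ▸ Finset.mem_univ t
      obtain ⟨v, hv, rfl⟩ := Finset.mem_image.mp this
      exact Finset.mem_image_of_mem κ (Finset.mem_filter.mpr ⟨hv, ht⟩)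
  have hinj : Set.InjOn κ τ := Finset.card_image_iff.mp (hbal τ hτΦ)
  -- uniqueness: any ρ ⊆ τ with image S equals the S-filter of τ
  have huniq : ∀ ρ : Finset V, ρ ⊆ τ → ρ.image κ = S →
      ρ = τ.filter (fun v => κ v ∈ S) := by
    intro ρ hρτ hρS
    have hsub : ρ ⊆ τ.filter (fun v => κ v ∈ S) := by
      intro v hv
      exact Finset.mem_filter.mpr ⟨hρτ hv, hρS ▸ Finset.mem_image_of_mem κ hv⟩
    apply Finset.eq_of_subset_of_card_le hsub
    have h1 : ρ.card = S.card := by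
      rw [← hρS]
      exact (Finset.card_image_of_injOn (hinj.mono (by exact_mod_cast hρτ))).symm
    have h2 : (τ.filter (fun v => κ v ∈ S)).card ≤ S.card := by
      have himg : (τ.filter (fun v => κ v ∈ S)).image κ ⊆ S := by
        intro t ht
        obtain ⟨v, hv, rfl⟩ := Finset.mem_image.mp ht
        exact (Finset.mem_filter.mp hv).2
      calc (τ.filter (fun v => κ v ∈ S)).card
          = ((τ.filter (fun v => κ v ∈ S)).image κ).card :=
            (Finset.card_image_of_injOn
              (hinj.mono (by exact_mod_cast Finset.filter_subset _ _))).symm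
        _ ≤ S.card := Finset.card_le_card himg
    omega
  -- evaluate the equation at τ
  have h := congrArg (fun g => g ⟨τ, hτΦ, hτT⟩) hf
  simp only [Finsupp.lsum_apply, Finsupp.sum_apply, Finsupp.sum,
    LinearMap.toSpanSingleton_apply, Finsupp.smul_apply, Finset.sum_apply',
    Finsupp.coe_zero, Pi.zero_apply, smul_eq_mul] at h
  have hcoef : ∀ σ' : {σ : Finset V // σ ∈ Φ ∧ σ.image κ = S},
      (∑ τ' : {τ : Finset V // τ ∈ Φ ∧ τ.image κ = T},
        (if σ'.1 ⊆ τ'.1 then Finsupp.single τ' (1 : ℂ) else 0) ⟨τ, hτΦ, hτT⟩)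
      = if σ' = σ then 1 else 0 := by
    intro σ'
    by_cases hss : σ'.1 ⊆ τ
    · have hσ'σ : σ' = σ := by
        apply Subtype.ext
        rw [huniq σ'.1 hss σ'.2.2, ← huniq σ.1 hστ hσS]
      rw [Finset.sum_eq_single ⟨τ, hτΦ, hτT⟩]
      · simp [hss, hσ'σ, hστ, Finsupp.single_eq_same]
      · intro b _ hb
        by_cases h2 : σ'.1 ⊆ b.1
        · simp [h2, Finsupp.single_apply, hb]
        · simp [h2]
      · simp
    · have : ∀ τ' : {τ : Finset V // τ ∈ Φ ∧ τ.image κ = T},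
          (if σ'.1 ⊆ τ'.1 then Finsupp.single τ' (1 : ℂ) else 0) ⟨τ, hτΦ, hτT⟩ = 0 := by
        intro τ'
        by_cases h2 : σ'.1 ⊆ τ'.1
        · simp only [h2, if_true, Finsupp.single_apply]
          rw [if_neg]
          intro h3
          subst h3
          exact hss h2
        · simp [h2]
      rw [Finset.sum_congr rfl (fun τ' _ => this τ')]
      have hne' : σ' ≠ σ := fun e => hss (by rw [e]; exact hστ)
      simp [hne']
  rw [Finset.sum_congr rfl (fun σ' _ => by rw [hcoef σ'])] at h
  by_cases hmem : σ ∈ f.support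
  · rw [Finset.sum_eq_single σ (fun b _ hb => by simp [hb]) (by simp [hmem])] at h
    simpa using h
  · simpa using Finsupp.notMem_support_iff.mp hmem
end

section
/- Let Φ be a pure balanced relative simplicial complex of dimension d with coloring κ, and let G be a group of automorphisms of Φ (color-preserving simplicial automorphisms). For S ⊆ T ⊆ [d+1], the permutation character of G acting on the faces with color set S is a subcharacter (as a G-representation) of the permutation character of G acting on faces with color set T. -/
open Module MulAction Pointwise

namespace LinearMap

theorem trace_eq_trace_restrict_add_trace_mapQ {R V : Type*} [CommRing R] [AddCommGroup V]
    [Module R V] (W : Submodule R V) [Module.Free R W] [Module.Finite R W]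
    [Module.Free R (V ⧸ W)] [Module.Finite R (V ⧸ W)] (e : V →ₗ[R] V) (he : W ≤ W.comap e) :
    trace R V e = trace R W (e.restrict he) + trace R (V ⧸ W) (W.mapQ W e he) := by
  classical
  let bW := Free.chooseBasis R W
  let bQ := Free.chooseBasis R (V ⧸ W)
  rw [trace_eq_matrix_trace R (bW.sumQuot bQ), trace_eq_matrix_trace R bW,
    trace_eq_matrix_trace R bQ]
  simp only [Matrix.trace, Matrix.diag_apply, toMatrix_apply, Fintype.sum_sum_type]
  congr 1
  · refine Finset.sum_congr rfl fun i _ => ?_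
    rw [Basis.sumQuot_inl]
    exact Basis.sumQuot_repr_inl_of_mem bW bQ _ (he (bW i).2) i
  · refine Finset.sum_congr rfl fun j _ => ?_
    rw [Basis.sumQuot_repr_inr, ← Basis.sumQuot_inr bW bQ j, W.mapQ_apply]
    rfl

theorem trace_restrict_range_of_injective {R M N : Type*} [CommRing R] [AddCommGroup M]
    [Module R M] [AddCommGroup N] [Module R N] {f : M →ₗ[R] N} (hf : Function.Injective f)
    {φ : N →ₗ[R] N} {ψ : M →ₗ[R] M} (hφ : ∀ m, φ (f m) = f (ψ m))
    (hmaps : range f ≤ (range f).comap φ) :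
    trace R (range f) (φ.restrict hmaps) = trace R M ψ := by
  rw [← trace_conj' ψ (LinearEquiv.ofInjective f hf)]
  congr 1
  ext x
  obtain ⟨m, rfl⟩ := (LinearEquiv.ofInjective f hf).surjective x
  simp [LinearEquiv.conj_apply, hφ]

end LinearMap

namespace Representation

def ofMulActionFun (k G X : Type*) [CommSemiring k] [Group G] [MulAction G X] :
    Representation k G (X → k) where
  toFun g := LinearMap.funLeft k k (g⁻¹ • ·)
  map_one' := by ext; simp
  map_mul' g h := by ext; simp [mul_smul]

variable {k G X : Type*} [Group G] [MulAction G X]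

@[simp]
theorem ofMulActionFun_apply [CommSemiring k] (g : G) (u : X → k) (x : X) :
    ofMulActionFun k G X g u x = u (g⁻¹ • x) := rfl

theorem character_ofMulActionFun [Field k] [Fintype X] (g : G) :
    (ofMulActionFun k G X).character g = Nat.card (fixedBy X g) := by
  classical
  rw [character, LinearMap.trace_eq_matrix_trace k (Pi.basisFun k X),
    LinearMap.toMatrix_eq_toMatrix', Matrix.trace, Nat.card_eq_fintype_card,
    Fintype.card_subtype, Finset.card_filter, Nat.cast_sum]
  refine Finset.sum_congr rfl fun x _ => ?_
  simp only [Matrix.diag_apply, LinearMap.toMatrix'_apply, ofMulActionFun_apply, Pi.single_apply,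
    mem_fixedBy, Nat.cast_ite, Nat.cast_one, Nat.cast_zero]
  exact if_congr (inv_smul_eq_iff.trans eq_comm) rfl rfl

theorem isEffectiveChar_character_sub_of_injective {G V W : Type} [Group G] [AddCommGroup V]
    [Module ℂ V] [FiniteDimensional ℂ V] [AddCommGroup W] [Module ℂ W] [FiniteDimensional ℂ W]
    {ρ : Representation ℂ G V} {σ : Representation ℂ G W} {f : V →ₗ[ℂ] W}
    (hf : IsIntertwiningMap ρ σ f) (hinj : Function.Injective f) :
    IsEffectiveChar G fun g => σ.character g - ρ.character g := by
  have hrange (g : G) : LinearMap.range f ≤ (LinearMap.range f).comap (σ g) := by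
    rintro _ ⟨v, rfl⟩
    exact ⟨ρ g v, hf.isIntertwining g v⟩
  refine ⟨FDRep.of (σ.quotient _ hrange), fun g => ?_⟩
  rw [sub_eq_iff_eq_add', character,
    LinearMap.trace_eq_trace_restrict_add_trace_mapQ _ _ (hrange g),
    LinearMap.trace_restrict_range_of_injective hinj fun v => (hf.isIntertwining g v).symm]
  rfl

end Representation

section Incidence

variable {k X Y : Type*} [CommSemiring k] [Fintype X] {R : X → Y → Prop} [DecidableRel R]

variable (k R) in
/-- On indicator functions this is `θ(x) = ∑_{y, R x y} y`. -/
def incidenceMap : (X → k) →ₗ[k] (Y → k) where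
  toFun u y := ∑ x with R x y, u x
  map_add' u v := by ext; simp [Finset.sum_add_distrib]
  map_smul' c u := by ext; simp [Finset.mul_sum]

theorem incidenceMap_apply (u : X → k) (y : Y) :
    incidenceMap k R u y = ∑ x with R x y, u x := rfl

theorem isIntertwiningMap_incidenceMap {G : Type*} [Group G] [MulAction G X] [MulAction G Y]
    (hR : ∀ (g : G) x y, R (g • x) (g • y) ↔ R x y) :
    Representation.IsIntertwiningMap (Representation.ofMulActionFun k G X)
      (Representation.ofMulActionFun k G Y) (incidenceMap k R) := by
  refine ⟨fun g u => funext fun y => ?_⟩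
  simp only [incidenceMap_apply, Representation.ofMulActionFun_apply, Finset.sum_filter]
  exact Fintype.sum_equiv (MulAction.toPerm g⁻¹) _ _ fun x => by simp [← hR g⁻¹ x y]

theorem incidenceMap_injective (hprivate : ∀ x, ∃ y, R x y ∧ ∀ x', R x' y → x' = x) :
    Function.Injective (incidenceMap k R) := by
  intro u v huv
  funext x
  obtain ⟨y, hxy, huniq⟩ := hprivate x
  have hsingle (w : X → k) : incidenceMap k R w y = w x :=
    Finset.sum_eq_single_of_mem x (by simpa using hxy)
      fun x' hx' hne => absurd (huniq x' (by simpa using hx')) hne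
  rw [← hsingle u, ← hsingle v, huv]

end Incidence

theorem isEffectiveChar_card_fixedBy_sub_card_fixedBy {G X Y : Type} [Group G] [MulAction G X]
    [MulAction G Y] [Finite X] [Finite Y] (R : X → Y → Prop)
    (hR : ∀ (g : G) x y, R (g • x) (g • y) ↔ R x y)
    (hprivate : ∀ x, ∃ y, R x y ∧ ∀ x', R x' y → x' = x) :
    IsEffectiveChar G fun g => (Nat.card (fixedBy Y g) : ℂ) - Nat.card (fixedBy X g) := by
  classical
  have := Fintype.ofFinite X
  have := Fintype.ofFinite Y
  simpa only [Representation.character_ofMulActionFun] using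
    Representation.isEffectiveChar_character_sub_of_injective
      (isIntertwiningMap_incidenceMap (k := ℂ) hR) (incidenceMap_injective hprivate)

section BalancedComplex

variable {V ι : Type*} [DecidableEq ι] {Φ : Finset (Finset V)} {κ : V → ι}

theorem exists_superset_mem_image_eq [Fintype ι]
    (hsandwich : ∀ ρ σ τ : Finset V, ρ ∈ Φ → τ ∈ Φ → ρ ⊆ σ → σ ⊆ τ → σ ∈ Φ)
    (hpure : ∀ ρ ∈ Φ, ∃ σ ∈ Φ, ρ ⊆ σ ∧ σ.card = Fintype.card ι)
    (hbal : ∀ σ ∈ Φ, (σ.image κ).card = σ.card)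
    {σ : Finset V} (hσ : σ ∈ Φ) {T : Finset ι} (hT : σ.image κ ⊆ T) :
    ∃ τ ∈ Φ, σ ⊆ τ ∧ τ.image κ = T := by
  obtain ⟨F, hF, hσF, hcard⟩ := hpure σ hσ
  have hFcolors : F.image κ = Finset.univ :=
    Finset.eq_univ_of_card _ ((hbal F hF).trans hcard)
  have hστ : σ ⊆ F.filter (fun v => κ v ∈ T) := fun v hv =>
    Finset.mem_filter.2 ⟨hσF hv, hT (Finset.mem_image_of_mem κ hv)⟩
  refine ⟨_, hsandwich σ _ F hσ hF hστ (Finset.filter_subset _ _), hστ, ?_⟩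
  rw [← Finset.filter_image (p := (· ∈ T)), hFcolors, Finset.filter_mem_eq_inter,
    Finset.univ_inter]

variable [DecidableEq V] {G : Type*} [Group G] [MulAction G V]
  (hΦ : ∀ g : G, ∀ σ ∈ Φ, g • σ ∈ Φ) (hκ : ∀ (g : G) v, κ (g • v) = κ v)

def coloredFaces (S : Finset ι) : SubMulAction G (Finset V) where
  carrier := {σ | σ ∈ Φ ∧ σ.image κ = S}
  smul_mem' g σ hσ := ⟨hΦ g σ hσ.1, by
    rw [Finset.smul_finset_def, Finset.image_image, ← hσ.2]
    exact Finset.image_congr fun v _ => hκ g v⟩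

instance (S : Finset ι) : Finite (coloredFaces hΦ hκ S) :=
  Finite.of_injective (fun σ => (⟨σ.1, σ.2.1⟩ : Φ)) fun _ _ h => Subtype.ext (Subtype.mk.inj h)

theorem card_fixedBy_coloredFaces (S : Finset ι) (g : G) :
    Nat.card (fixedBy (coloredFaces hΦ hκ S) g) =
      Nat.card {σ : Finset V // σ ∈ Φ ∧ σ.image κ = S ∧ g • σ = σ} :=
  Nat.card_congr
    { toFun := fun σ => ⟨σ.1.1, σ.1.2.1, σ.1.2.2, congrArg Subtype.val σ.2⟩
      invFun := fun σ => ⟨⟨σ.1, σ.2.1, σ.2.2.1⟩, Subtype.ext σ.2.2.2⟩ }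

end BalancedComplex

theorem perm_character_faces_subcharacter_general
    {V : Type} [DecidableEq V] (d : ℕ)
    (Φ : Finset (Finset V)) (κ : V → Fin (d + 1))
    (hsandwich : ∀ ρ σ τ : Finset V, ρ ∈ Φ → τ ∈ Φ → ρ ⊆ σ → σ ⊆ τ → σ ∈ Φ)
    (hpure : ∀ ρ ∈ Φ, ∃ σ ∈ Φ, ρ ⊆ σ ∧ σ.card = d + 1)
    (hbal : ∀ σ ∈ Φ, (σ.image κ).card = σ.card)
    (G : Type) [Group G] (ρG : G →* Equiv.Perm V)
    (hκ : ∀ (g : G) (v : V), κ (ρG g v) = κ v)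
    (hact : ∀ (g : G), ∀ σ ∈ Φ, σ.image (ρG g) ∈ Φ)
    (S T : Finset (Fin (d + 1))) (hST : S ⊆ T) :
    IsEffectiveChar G (fun g : G =>
      (Nat.card {τ : Finset V // τ ∈ Φ ∧ τ.image κ = T ∧ τ.image (ρG g) = τ} : ℂ)
        - (Nat.card {σ : Finset V // σ ∈ Φ ∧ σ.image κ = S ∧ σ.image (ρG g) = σ} : ℂ)) := by
  let _ : MulAction G V := MulAction.compHom V ρG
  have hΦ : ∀ g : G, ∀ σ ∈ Φ, g • σ ∈ Φ := hact
  have hκ' : ∀ (g : G) v, κ (g • v) = κ v := hκ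
  have hprivate (σ : coloredFaces hΦ hκ' S) : ∃ τ : coloredFaces hΦ hκ' T,
      σ.1 ⊆ τ.1 ∧ ∀ σ' : coloredFaces hΦ hκ' S, σ'.1 ⊆ τ.1 → σ' = σ := by
    obtain ⟨τ, hτ, hστ, hτT⟩ :=
      exists_superset_mem_image_eq hsandwich (by simpa using hpure) hbal σ.2.1 (σ.2.2 ▸ hST)
    refine ⟨⟨τ, hτ, hτT⟩, hστ, fun σ' hσ'τ => Subtype.ext ?_⟩
    exact (Finset.image_eq_image_iff_of_injOn (Finset.injOn_of_card_image_eq (hbal τ hτ))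
      hσ'τ hστ).1 (σ'.2.2.trans σ.2.2.symm)
  have := isEffectiveChar_card_fixedBy_sub_card_fixedBy (G := G)
    (fun (σ : coloredFaces hΦ hκ' S) (τ : coloredFaces hΦ hκ' T) => σ.1 ⊆ τ.1)
    (fun g _ _ => Finset.smul_finset_subset_smul_finset_iff) hprivate
  simp only [card_fixedBy_coloredFaces] at this
  exact this

/-- Let `Φ` be a pure balanced relative simplicial complex of dimension `d` with
coloring `κ`, and let `G` act on the vertices by color-preserving automorphisms of
`Φ` (via `ρG : G →* Perm V`).  For color sets `S ⊆ T ⊆ [d+1]`, the permutation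
character of `G` acting on the faces with color set `S` is a subcharacter of the
permutation character of `G` on the faces with color set `T`: their difference is an
effective character.  (The permutation character assigns to `g` its number of fixed
faces.) -/
theorem perm_character_faces_subcharacter
    {V : Type} [Fintype V] [DecidableEq V] (d : ℕ)
    (Φ : Finset (Finset V)) (κ : V → Fin (d + 1))
    (hne : Φ.Nonempty)
    (hsandwich : ∀ ρ σ τ : Finset V, ρ ∈ Φ → τ ∈ Φ → ρ ⊆ σ → σ ⊆ τ → σ ∈ Φ)
    (hpure : ∀ ρ ∈ Φ, ∃ σ ∈ Φ, ρ ⊆ σ ∧ σ.card = d + 1)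
    (hbal : ∀ σ ∈ Φ, (σ.image κ).card = σ.card)
    (G : Type) [Group G] [Fintype G] (ρG : G →* Equiv.Perm V)
    (hκ : ∀ (g : G) (v : V), κ (ρG g v) = κ v)
    (hact : ∀ (g : G), ∀ σ ∈ Φ, σ.image (ρG g) ∈ Φ)
    (S T : Finset (Fin (d + 1))) (hST : S ⊆ T) :
    IsEffectiveChar G (fun g : G =>
      (Nat.card {τ : Finset V // τ ∈ Φ ∧ τ.image κ = T ∧ τ.image (ρG g) = τ} : ℂ)
        - (Nat.card {σ : Finset V // σ ∈ Φ ∧ σ.image κ = S ∧ σ.image (ρG g) = σ} : ℂ)) :=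
  perm_character_faces_subcharacter_general d Φ κ hsandwich hpure hbal G ρG hκ hact S T hST
end

section
/- Let G be a finite graph on vertex set N and let 𝔊 be a subgroup of its automorphism group. Then the set of proper colorings f : N → {1,...,k} is invariant under the action g·f = f ∘ g⁻¹, and the number of orbits of 𝔊 on proper k-colorings equals (1/|𝔊|) Σ_{g∈𝔊} |{proper k-colorings f : f ∘ g⁻¹ = f}|; in particular, for each fixed g this fixed-point count, as a function of k, agrees with a polynomial in k. -/
open Finset MulAction

section Aux

variable {N : Type} [Fintype N] [DecidableEq N]

/-- If `j` exceeds the number of vertices there are no surjections onto `Fin j`. -/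
lemma aux_surj_zero (P : ∀ k : ℕ, (N → Fin k) → Prop) {j : ℕ} (hj : Fintype.card N < j) :
    Nat.card {f : N → Fin j // P j f ∧ Function.Surjective f} = 0 := by
  rw [Nat.card_eq_zero]
  left
  constructor
  rintro ⟨f, -, hs⟩
  have := Fintype.card_le_of_surjective f hs
  simp only [Fintype.card_fin] at this
  omega

/-- Fiber over a fixed image `s` is equinumerous with surjections onto `Fin s.card`. -/
noncomputable def aux_fiber_equiv (P : ∀ k : ℕ, (N → Fin k) → Prop)
    (hP : ∀ {j k : ℕ} (ι : Fin j → Fin k), Function.Injective ι →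
      ∀ f : N → Fin j, (P k (ι ∘ f) ↔ P j f)) (k : ℕ) (s : Finset (Fin k)) :
    {f : N → Fin k // P k f ∧ Finset.image f Finset.univ = s} ≃
      {f : N → Fin s.card // P s.card f ∧ Function.Surjective f} := by
  classical
  set e : Fin s.card ≃o {x // x ∈ s} := s.orderIsoOfFin rfl with he
  set ι : Fin s.card → Fin k := fun m => (e m : Fin k) with hι
  have hιinj : Function.Injective ι := by
    intro a b hab
    exact e.injective (Subtype.ext hab)
  refine
    { toFun := fun f => ⟨fun n => e.symm ⟨f.1 n, ?_⟩, ?_, ?_⟩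
      invFun := fun f => ⟨ι ∘ f.1, ?_, ?_⟩
      left_inv := ?_
      right_inv := ?_ }
  · -- membership of `f.1 n` in `s`
    have h := Finset.mem_image_of_mem f.1 (Finset.mem_univ n)
    rwa [f.2.2] at h
  · -- the composed map satisfies P
    have hcomp : ι ∘ (fun n => e.symm ⟨f.1 n, by
        have h := Finset.mem_image_of_mem f.1 (Finset.mem_univ n)
        rwa [f.2.2] at h⟩) = f.1 := by
      funext n
      simp [ι]
    refine (hP ι hιinj _).mp ?_
    rw [hcomp]
    exact f.2.1
  · -- surjectivity
    intro m
    have hmem : (e m : Fin k) ∈ Finset.image f.1 Finset.univ := by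
      rw [f.2.2]; exact (e m).2
    obtain ⟨n, -, hn⟩ := Finset.mem_image.1 hmem
    refine ⟨n, ?_⟩
    have h2 : (⟨f.1 n, by
        have h := Finset.mem_image_of_mem f.1 (Finset.mem_univ n)
        rwa [f.2.2] at h⟩ :
        {x // x ∈ s}) = e m := Subtype.ext hn
    simp [h2]
  · -- invFun satisfies P
    exact (hP ι hιinj f.1).2 f.2.1
  · -- invFun has image s
    ext x
    constructor
    · intro hx
      obtain ⟨n, -, hn⟩ := Finset.mem_image.1 hx
      rw [← hn]
      exact (e (f.1 n)).2
    · intro hx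
      obtain ⟨n, hn⟩ := f.2.2 (e.symm ⟨x, hx⟩)
      refine Finset.mem_image.2 ⟨n, Finset.mem_univ n, ?_⟩
      show ι (f.1 n) = x
      rw [hn]
      simp [ι]
  · intro f
    apply Subtype.ext
    funext n
    simp [ι]
  · intro f
    apply Subtype.ext
    funext n
    apply hιinj
    show ι _ = ι (f.1 n)
    simp [ι]

/-- Counting lemma: the number of functions satisfying an injection-stable predicate family
equals a binomial combination of surjection counts. -/
lemma aux_count (P : ∀ k : ℕ, (N → Fin k) → Prop)
    (hP : ∀ {j k : ℕ} (ι : Fin j → Fin k), Function.Injective ι →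
      ∀ f : N → Fin j, (P k (ι ∘ f) ↔ P j f)) (k : ℕ) :
    Nat.card {f : N → Fin k // P k f} =
      ∑ j ∈ Finset.range (Fintype.card N + 1),
        k.choose j * Nat.card {f : N → Fin j // P j f ∧ Function.Surjective f} := by
  classical
  set b : ℕ → ℕ := fun j => Nat.card {f : N → Fin j // P j f ∧ Function.Surjective f} with hb
  -- Step 1: split by image
  have h1 : Nat.card {f : N → Fin k // P k f} =
      ∑ s : Finset (Fin k), Nat.card {f : N → Fin k // P k f ∧ Finset.image f Finset.univ = s} := by
    rw [Nat.card_eq_fintype_card, Fintype.card_subtype]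
    rw [Finset.card_eq_sum_card_fiberwise
      (f := fun f : N → Fin k => Finset.image f Finset.univ) (t := Finset.univ)
      (fun f _ => Finset.mem_univ _)]
    refine Finset.sum_congr rfl fun s _ => ?_
    rw [Nat.card_eq_fintype_card, Fintype.card_subtype, Finset.filter_filter]
  -- Step 2: each fiber counts surjections
  have h2 : ∀ s : Finset (Fin k),
      Nat.card {f : N → Fin k // P k f ∧ Finset.image f Finset.univ = s} = b s.card :=
    fun s => Nat.card_congr (aux_fiber_equiv P hP k s)
  -- Step 3: group by cardinality
  have h3 : ∑ s : Finset (Fin k), b s.card = ∑ j ∈ Finset.range (k + 1), k.choose j * b j := by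
    rw [← Finset.sum_fiberwise_of_maps_to (g := fun s : Finset (Fin k) => s.card)
      (t := Finset.range (k + 1))
      (fun s _ => Finset.mem_range.2 (Nat.lt_succ_of_le
        (le_trans (Finset.card_le_univ s) (by simp))))
      (f := fun s : Finset (Fin k) => b s.card)]
    refine Finset.sum_congr rfl fun j _ => ?_
    have : ∀ s ∈ Finset.univ.filter (fun s : Finset (Fin k) => s.card = j),
        b s.card = b j := by
      intro s hs
      rw [(Finset.mem_filter.1 hs).2]
    rw [Finset.sum_congr rfl this, Finset.sum_const, smul_eq_mul]
    congr 1
    have : Finset.univ.filter (fun s : Finset (Fin k) => s.card = j) =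
        Finset.powersetCard j (Finset.univ : Finset (Fin k)) := by
      rw [Finset.powersetCard_eq_filter, Finset.powerset_univ]
    rw [this, Finset.card_powersetCard]
    simp
  -- Step 4: adjust the range
  have h4 : ∑ j ∈ Finset.range (k + 1), k.choose j * b j =
      ∑ j ∈ Finset.range (Fintype.card N + 1), k.choose j * b j := by
    have hz : ∀ j, (k < j ∨ Fintype.card N < j) → k.choose j * b j = 0 := by
      rintro j (hj | hj)
      · rw [Nat.choose_eq_zero_of_lt hj, zero_mul]
      · show k.choose j * Nat.card {f : N → Fin j // P j f ∧ Function.Surjective f} = 0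
        rw [aux_surj_zero P hj, mul_zero]
    have e1 := Finset.sum_subset
        (Finset.range_subset_range.2 (Nat.add_le_add_right (le_max_left k (Fintype.card N)) 1) :
          Finset.range (k+1) ⊆ Finset.range (max k (Fintype.card N) + 1))
        (fun j hj' hj => hz j (Or.inl (by simp at hj' hj ⊢; omega)))
    have e2 := Finset.sum_subset
        (Finset.range_subset_range.2 (Nat.add_le_add_right (le_max_right k (Fintype.card N)) 1) :
          Finset.range (Fintype.card N + 1) ⊆ Finset.range (max k (Fintype.card N) + 1))
        (fun j hj' hj => hz j (Or.inr (by simp at hj' hj ⊢; omega)))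
    exact e1.trans e2.symm
  rw [h1, Finset.sum_congr rfl (fun s _ => h2 s), h3, h4]

/-- Polynomiality for injection-stable predicate families. -/
lemma aux_poly (P : ∀ k : ℕ, (N → Fin k) → Prop)
    (hP : ∀ {j k : ℕ} (ι : Fin j → Fin k), Function.Injective ι →
      ∀ f : N → Fin j, (P k (ι ∘ f) ↔ P j f)) :
    ∃ p : Polynomial ℚ, ∀ k : ℕ,
      (Nat.card {f : N → Fin k // P k f} : ℚ) = p.eval (k : ℚ) := by
  classical
  set b : ℕ → ℕ := fun j => Nat.card {f : N → Fin j // P j f ∧ Function.Surjective f} with hb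
  refine ⟨∑ j ∈ Finset.range (Fintype.card N + 1),
      Polynomial.C ((b j : ℚ) / (j.factorial : ℚ)) * descPochhammer ℚ j, fun k => ?_⟩
  rw [aux_count P hP k]
  rw [Polynomial.eval_finset_sum]
  push_cast
  refine Finset.sum_congr rfl fun j _ => ?_
  rw [Polynomial.eval_mul, Polynomial.eval_C, descPochhammer_eval_eq_descFactorial ℚ k j,
    Nat.descFactorial_eq_factorial_mul_choose]
  have hfac : (j.factorial : ℚ) ≠ 0 := Nat.cast_ne_zero.2 (Nat.factorial_ne_zero j)
  push_cast
  field_simp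
  simp only [hb, Nat.card_eq_fintype_card]

end Aux

/-- `f` is a proper coloring of the simple graph `G` with colors in `Fin k`. -/
def IsProperColoring {N : Type*} (G : SimpleGraph N) {k : ℕ} (f : N → Fin k) : Prop :=
  ∀ u v : N, G.Adj u v → f u ≠ f v

/-- Let `G` be a finite graph and `𝔊` a subgroup of its automorphism group.  Then the
set of proper `k`-colorings is invariant under the action `g·f = f ∘ g⁻¹`, the number
of orbits of `𝔊` on proper `k`-colorings equals the average over `g ∈ 𝔊` of the number
of proper `k`-colorings fixed by `g` (Burnside), and for each fixed `g` the number of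
fixed proper `k`-colorings, as a function of `k`, agrees with a polynomial in `k`. -/
theorem orbital_chromatic_polynomial {N : Type} [Fintype N] [DecidableEq N]
    (G : SimpleGraph N) (𝔊 : Subgroup (Equiv.Perm N)) [Fintype 𝔊]
    (haut : ∀ g ∈ 𝔊, ∀ u v : N, G.Adj (g u) (g v) ↔ G.Adj u v) :
    (∀ g ∈ 𝔊, ∀ (k : ℕ) (f : N → Fin k),
        IsProperColoring G f → IsProperColoring G (f ∘ ⇑g⁻¹)) ∧
    (∀ k : ℕ,
      (Nat.card (Quot (fun f f' : {f : N → Fin k // IsProperColoring G f} =>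
          ∃ g ∈ 𝔊, f'.1 = f.1 ∘ ⇑g⁻¹)) : ℚ)
        = (1 / (Nat.card 𝔊 : ℚ)) *
            ∑ g : 𝔊, (Nat.card {f : N → Fin k //
                IsProperColoring G f ∧ f ∘ ⇑(g : Equiv.Perm N)⁻¹ = f} : ℚ)) ∧
    (∀ g ∈ 𝔊, ∃ p : Polynomial ℚ, ∀ k : ℕ,
      (Nat.card {f : N → Fin k // IsProperColoring G f ∧ f ∘ ⇑g⁻¹ = f} : ℚ)
        = p.eval (k : ℚ)) := by
  classical
  -- Part 1: invariance
  have part1 : ∀ g ∈ 𝔊, ∀ (k : ℕ) (f : N → Fin k),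
      IsProperColoring G f → IsProperColoring G (f ∘ ⇑g⁻¹) := by
    intro g hg k f hf u v huv
    apply hf
    rw [← haut g hg]
    simpa using huv
  refine ⟨part1, ?_, ?_⟩
  · -- Part 2: Burnside
    intro k
    letI act : MulAction 𝔊 {f : N → Fin k // IsProperColoring G f} :=
      { smul := fun g f => ⟨f.1 ∘ ⇑(g : Equiv.Perm N)⁻¹,
          part1 (g : Equiv.Perm N) g.2 k f.1 f.2⟩
        one_smul := fun f => Subtype.ext (by funext n; rfl)
        mul_smul := fun g h f => Subtype.ext (by funext n; rfl) }
    have hsmul : ∀ (g : 𝔊) (f : {f : N → Fin k // IsProperColoring G f}),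
        (g • f).1 = f.1 ∘ ⇑(g : Equiv.Perm N)⁻¹ := fun _ _ => rfl
    -- identify the Quot with the orbit quotient
    have hquot : Nat.card (Quot (fun f f' : {f : N → Fin k // IsProperColoring G f} =>
        ∃ g ∈ 𝔊, f'.1 = f.1 ∘ ⇑g⁻¹)) =
        Nat.card (Quotient (orbitRel 𝔊 {f : N → Fin k // IsProperColoring G f})) := by
      apply Nat.card_congr
      apply Quot.congrRight
      intro f f'
      constructor
      · rintro ⟨g, hg, hff⟩
        refine ⟨⟨g⁻¹, 𝔊.inv_mem hg⟩, ?_⟩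
        apply Subtype.ext
        rw [hsmul]
        funext n
        simp only [hff]
        simp
      · rintro ⟨g, hgf⟩
        refine ⟨(g : Equiv.Perm N)⁻¹, 𝔊.inv_mem g.2, ?_⟩
        have := congrArg Subtype.val hgf
        rw [hsmul] at this
        funext n
        rw [← this]
        simp
    -- identify the fixed points
    have hfix : ∀ g : 𝔊,
        Nat.card {f : N → Fin k // IsProperColoring G f ∧ f ∘ ⇑(g : Equiv.Perm N)⁻¹ = f} =
        Nat.card (fixedBy {f : N → Fin k // IsProperColoring G f} g) := by
      intro g
      apply Nat.card_congr
      refine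
        { toFun := fun f => ⟨⟨f.1, f.2.1⟩, ?_⟩
          invFun := fun f => ⟨f.1.1, f.1.2, ?_⟩
          left_inv := fun f => rfl
          right_inv := fun f => Subtype.ext (Subtype.ext rfl) }
      · show g • (⟨f.1, f.2.1⟩ : {f : N → Fin k // IsProperColoring G f}) = _
        exact Subtype.ext (by rw [hsmul]; exact f.2.2)
      · have : g • f.1 = f.1 := f.2
        have := congrArg Subtype.val this
        rw [hsmul] at this
        exact this
    letI : ∀ a : 𝔊, Fintype (fixedBy {f : N → Fin k // IsProperColoring G f} a) :=
      fun a => Fintype.ofFinite _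
    letI : Fintype (Quotient (orbitRel 𝔊 {f : N → Fin k // IsProperColoring G f})) :=
      Fintype.ofFinite _
    have hburn := MulAction.sum_card_fixedBy_eq_card_orbits_mul_card_group 𝔊
      {f : N → Fin k // IsProperColoring G f}
    have hcard : (Nat.card 𝔊 : ℚ) ≠ 0 := by
      simp [Nat.card_eq_fintype_card, Fintype.card_ne_zero]
    rw [hquot]
    rw [eq_comm, one_div, inv_mul_eq_iff_eq_mul₀ hcard, eq_comm]
    have : ∑ g : 𝔊, (Nat.card {f : N → Fin k //
        IsProperColoring G f ∧ f ∘ ⇑(g : Equiv.Perm N)⁻¹ = f} : ℚ) =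
        ((∑ a : 𝔊, Fintype.card (fixedBy {f : N → Fin k // IsProperColoring G f} a) : ℕ) : ℚ) := by
      push_cast
      refine Finset.sum_congr rfl fun g _ => ?_
      rw [hfix g, Nat.card_eq_fintype_card]
    rw [this, hburn]
    push_cast [Nat.card_eq_fintype_card]
    ring
  · -- Part 3: polynomiality
    intro g hg
    have hP : ∀ {j k : ℕ} (ι : Fin j → Fin k), Function.Injective ι →
        ∀ f : N → Fin j,
          ((IsProperColoring G (ι ∘ f) ∧ (ι ∘ f) ∘ ⇑g⁻¹ = ι ∘ f) ↔
            (IsProperColoring G f ∧ f ∘ ⇑g⁻¹ = f)) := by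
      intro j k ι hι f
      constructor
      · rintro ⟨hp, hfix⟩
        refine ⟨fun u v huv h => hp u v huv (congrArg ι h), ?_⟩
        funext n
        exact hι (congrFun hfix n)
      · rintro ⟨hp, hfix⟩
        refine ⟨fun u v huv h => hp u v huv (hι h), ?_⟩
        funext n
        exact congrArg ι (congrFun hfix n)
    exact aux_poly (fun k f => IsProperColoring G f ∧ f ∘ ⇑g⁻¹ = f) hP
end

section
/- Let P be a finite poset on N and 𝔊 a subgroup of Aut(P). A P-partition is an order-preserving map σ : P → ℕ. Then 𝔊 acts on P-partitions by g·σ = σ ∘ g⁻¹, and for each g ∈ 𝔊 and each positive integer k, the number of order-preserving maps σ : P → {1,...,k} fixed by g equals Σ_C binom(k, ℓ(C)), where the sum is over g-fixed set compositions C = C_1|...|C_m of N such that C_1 ∪ ... ∪ C_i is an order ideal of P for every i. -/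
open Finset Function

private lemma card_strictMono_fin (m k : ℕ) :
    Nat.card {f : Fin m → Fin k // StrictMono f} = Nat.choose k m := by
  classical
  have e : {f : Fin m → Fin k // StrictMono f} ≃ {s : Finset (Fin k) // s.card = m} :=
    { toFun := fun f => ⟨Finset.univ.image f.1, by
        rw [Finset.card_image_of_injective _ f.2.injective, Finset.card_univ, Fintype.card_fin]⟩
      invFun := fun s => ⟨s.1.orderEmbOfFin s.2, (s.1.orderEmbOfFin s.2).strictMono⟩
      left_inv := fun f => by
        apply Subtype.ext
        exact (Finset.orderEmbOfFin_unique _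
          (fun x => Finset.mem_image_of_mem _ (Finset.mem_univ x)) f.2).symm
      right_inv := fun s => by
        apply Subtype.ext
        apply Finset.coe_injective
        rw [Finset.coe_image, Finset.coe_univ, Set.image_univ]
        exact Finset.range_orderEmbOfFin _ _ }
  rw [Nat.card_congr e, Nat.card_eq_fintype_card, Fintype.card_finset_len, Fintype.card_fin]

/-- Let `P` be a finite poset on `N` and `𝔊` a subgroup of `Aut(P)` (permutations of
`N` preserving the order both ways).  For each `g ∈ 𝔊` and each `k`, the number of
order-preserving maps `σ : N → {1,…,k}` fixed by `g` (under `g·σ = σ ∘ g⁻¹`) equals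
`Σ_C binom(k, ℓ(C))`, summed over `g`-fixed set compositions `C` of `N` whose initial
unions of blocks are order ideals.  Such compositions with `m` blocks are encoded as
monotone surjections `s : N → Fin m` (blocks are the fibers, in order); the sum is
grouped by the number of blocks `m`, which ranges from `0` to `|N|`. -/
theorem fixed_poset_partitions_count {N : Type} [Fintype N] [DecidableEq N]
    [PartialOrder N] (𝔊 : Subgroup (Equiv.Perm N))
    (haut : ∀ g ∈ 𝔊, ∀ x y : N, g x ≤ g y ↔ x ≤ y)
    (g : Equiv.Perm N) (hg : g ∈ 𝔊) (k : ℕ) :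
    Nat.card {σ : N → Fin k // Monotone σ ∧ σ ∘ ⇑g⁻¹ = σ}
      = ∑ m ∈ Finset.range (Fintype.card N + 1),
          Nat.card {s : N → Fin m //
              Function.Surjective s ∧ Monotone s ∧ s ∘ ⇑g⁻¹ = s}
            * Nat.choose k m := by
  classical
  set n := Fintype.card N with hn
  set A : ℕ → Type := fun m =>
    {s : N → Fin m // Function.Surjective s ∧ Monotone s ∧ s ∘ ⇑g⁻¹ = s} with hA
  set B : ℕ → Type := fun m => {f : Fin m → Fin k // StrictMono f} with hB
  -- the decomposition map
  let F : (Σ m : Fin (n + 1), A m.val × B m.val) →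
      {σ : N → Fin k // Monotone σ ∧ σ ∘ ⇑g⁻¹ = σ} := fun x =>
    ⟨x.2.2.1 ∘ x.2.1.1, x.2.2.2.monotone.comp x.2.1.2.2.1, by
      have hfix := x.2.1.2.2.2
      funext y
      exact congrArg x.2.2.1 (congrFun hfix y)⟩
  have hbij : Function.Bijective F := by
    constructor
    · -- injectivity
      rintro ⟨⟨m₁, hm₁⟩, ⟨s₁, hs₁surj, hs₁mono, hs₁fix⟩, ⟨f₁, hf₁⟩⟩
        ⟨⟨m₂, hm₂⟩, ⟨s₂, hs₂surj, hs₂mono, hs₂fix⟩, ⟨f₂, hf₂⟩⟩ h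
      have hfun : f₁ ∘ s₁ = f₂ ∘ s₂ := congrArg Subtype.val h
      -- the images of the composites agree
      have himage : Finset.univ.image (f₁ ∘ s₁) = Finset.univ.image (f₂ ∘ s₂) := by
        rw [hfun]
      have himg : ∀ (m : ℕ) (s : N → Fin m) (f : Fin m → Fin k),
          Function.Surjective s → StrictMono f →
          (Finset.univ.image (f ∘ s)).card = m := by
        intro m s f hs hf
        have h1 : Finset.univ.image (f ∘ s) = Finset.univ.image f := by
          rw [← Finset.image_image]
          congr 1
          exact Finset.image_univ_of_surjective hs
        rw [h1, Finset.card_image_of_injective _ hf.injective, Finset.card_univ,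
          Fintype.card_fin]
      have hm : m₁ = m₂ := by
        rw [← himg m₁ s₁ f₁ hs₁surj hf₁, ← himg m₂ s₂ f₂ hs₂surj hf₂, himage]
      subst hm
      -- now show f₁ = f₂ from equal images, then s₁ = s₂
      have himf : Finset.univ.image f₁ = Finset.univ.image f₂ := by
        have h1 : Finset.univ.image (f₁ ∘ s₁) = Finset.univ.image f₁ := by
          rw [← Finset.image_image]; congr 1
          exact Finset.image_univ_of_surjective hs₁surj
        have h2 : Finset.univ.image (f₂ ∘ s₂) = Finset.univ.image f₂ := by
          rw [← Finset.image_image]; congr 1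
          exact Finset.image_univ_of_surjective hs₂surj
        rw [← h1, ← h2, himage]
      have hcard : (Finset.univ.image f₁).card = m₁ := by
        rw [Finset.card_image_of_injective _ hf₁.injective, Finset.card_univ,
          Fintype.card_fin]
      have hfeq : f₁ = f₂ := by
        have e1 := Finset.orderEmbOfFin_unique hcard
          (f := f₁) (fun x => Finset.mem_image_of_mem _ (Finset.mem_univ x)) hf₁
        have e2 := Finset.orderEmbOfFin_unique hcard
          (f := f₂) (fun x => himf ▸ Finset.mem_image_of_mem _ (Finset.mem_univ x)) hf₂
        rw [e1, e2]
      subst hfeq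
      have hseq : s₁ = s₂ := by
        funext x
        exact hf₁.injective (congrFun hfun x)
      subst hseq
      rfl
    · -- surjectivity
      rintro ⟨σ, hmono, hfix⟩
      set T : Finset (Fin k) := Finset.univ.image σ with hT
      set m : ℕ := T.card with hmdef
      have hm : m < n + 1 := by
        apply Nat.lt_succ_of_le
        calc m ≤ Finset.univ.card := Finset.card_image_le
          _ = n := Finset.card_univ
      have hmem : ∀ x, σ x ∈ T := fun x => Finset.mem_image_of_mem _ (Finset.mem_univ x)
      set e := T.orderIsoOfFin (rfl : T.card = m) with he
      set s : N → Fin m := fun x => e.symm ⟨σ x, hmem x⟩ with hs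
      set ι : Fin m → Fin k := fun i => (e i : Fin k) with hι
      have hcomp : ∀ x, ι (s x) = σ x := by
        intro x
        show ((e (e.symm ⟨σ x, hmem x⟩)) : Fin k) = σ x
        rw [e.apply_symm_apply]
      have hsurj : Function.Surjective s := by
        intro j
        have hj : (e j : Fin k) ∈ Finset.univ.image σ := (e j).2
        obtain ⟨x, _, hx⟩ := Finset.mem_image.mp hj
        refine ⟨x, ?_⟩
        show e.symm ⟨σ x, hmem x⟩ = j
        have : (⟨σ x, hmem x⟩ : {a // a ∈ T}) = e j := Subtype.ext hx
        rw [this, e.symm_apply_apply]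
      have hsmono : Monotone s := by
        intro x y hxy
        exact e.symm.monotone (Subtype.mk_le_mk.mpr (hmono hxy))
      have hsfix : s ∘ ⇑g⁻¹ = s := by
        funext x
        show e.symm ⟨σ (g⁻¹ x), hmem _⟩ = e.symm ⟨σ x, hmem x⟩
        congr 1
        exact Subtype.ext (congrFun hfix x)
      have hιmono : StrictMono ι := fun a b hab => by
        have := (T.orderIsoOfFin rfl).strictMono hab
        exact this
      refine ⟨⟨⟨m, hm⟩, ⟨s, hsurj, hsmono, hsfix⟩, ⟨ι, hιmono⟩⟩, ?_⟩
      apply Subtype.ext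
      funext x
      exact hcomp x
  have hcard := Nat.card_eq_of_bijective F hbij
  rw [← hcard, Nat.card_eq_fintype_card, Fintype.card_sigma]
  have : ∀ m : Fin (n + 1), Fintype.card (A m.val × B m.val)
      = Nat.card (A m.val) * Nat.choose k m.val := by
    intro m
    rw [Fintype.card_prod, ← Nat.card_eq_fintype_card, ← Nat.card_eq_fintype_card,
      hB]
    rw [card_strictMono_fin]
  rw [Finset.sum_congr rfl fun m _ => this m]
  exact Fin.sum_univ_eq_sum_range (fun m => Nat.card (A m) * Nat.choose k m) (n + 1)
end
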